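/- For every integer $g \geq 2$, the sum $\sum_{j=0}^{g} (j+1)(-1)^j (2g-2)^{2j} 2^{g-j}$ is non-zero. -/

import Mathlib

/-!
Modulo `2 ^ (g + 1)` only the `j = 0` term `2 ^ g` survives: for `j ≥ 1` the term carries
`2 ^ (2 * j)` from the even base `2 * g - 2` and `2 ^ (g - j)`, hence a factor `2 ^ (g + j)`.
So the sum is an odd multiple of `2 ^ g`.
-/

lemma two_pow_succ_dvd_even_pow_mul_two_pow {m : ℤ} (hm : Even m) {n j : ℕ} (hj : j + 1 ≤ n) :
    (2 : ℤ) ^ (n + 1) ∣ m ^ (2 * (j + 1)) * 2 ^ (n - (j + 1)) := by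
  obtain ⟨k, rfl⟩ := hm
  have hsplit : (k + k) ^ (2 * (j + 1)) * 2 ^ (n - (j + 1))
      = 2 ^ (2 * (j + 1) + (n - (j + 1))) * k ^ (2 * (j + 1)) := by
    rw [pow_add, ← two_mul, mul_pow]; ring
  rw [hsplit]
  exact Dvd.dvd.mul_right (pow_dvd_pow 2 (by omega)) _

theorem sum_mul_even_pow_mul_two_pow_ne_zero (c : ℕ → ℤ) (hc : Odd (c 0)) {m : ℤ} (hm : Even m)
    (n : ℕ) : ∑ j ∈ Finset.range (n + 1), c j * m ^ (2 * j) * 2 ^ (n - j) ≠ 0 := by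
  have htail : (2 : ℤ) ^ (n + 1) ∣
      ∑ j ∈ Finset.range n, c (j + 1) * m ^ (2 * (j + 1)) * 2 ^ (n - (j + 1)) :=
    Finset.dvd_sum fun j hj => by
      rw [mul_assoc]
      exact (two_pow_succ_dvd_even_pow_mul_two_pow hm (Finset.mem_range.mp hj)).mul_left _
  rw [Finset.sum_range_succ', mul_zero, pow_zero, mul_one, Nat.sub_zero]
  intro hzero
  have hhead : (2 : ℤ) ^ n * 2 ∣ 2 ^ n * c 0 := by
    rw [← pow_succ, mul_comm, eq_neg_of_add_eq_zero_right hzero]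
    exact htail.neg_right
  have htwo : (2 : ℤ) ∣ c 0 := (mul_dvd_mul_iff_left (pow_ne_zero n two_ne_zero)).mp hhead
  exact Int.not_even_iff_odd.mpr hc (even_iff_two_dvd.mpr htwo)

theorem stmt3_general (g : ℕ) :
    ∑ j ∈ Finset.range (g + 1),
      ((j : ℚ) + 1) * (-1) ^ j * (2 * (g : ℚ) - 2) ^ (2 * j) * 2 ^ (g - j) ≠ 0 := by
  have hint := sum_mul_even_pow_mul_two_pow_ne_zero (fun j => ((j : ℤ) + 1) * (-1) ^ j)
    (by simp) (m := 2 * (g : ℤ) - 2) (by simp [parity_simps]) g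
  exact_mod_cast hint

/-- For every integer `g ≥ 2`, the sum `∑_{j=0}^{g} (j+1)(-1)^j (2g-2)^(2j) 2^(g-j)`
is non-zero. -/
theorem stmt3 (g : ℕ) (hg : 2 ≤ g) :
    ∑ j ∈ Finset.range (g + 1),
      ((j : ℚ) + 1) * (-1) ^ j * (2 * (g : ℚ) - 2) ^ (2 * j) * 2 ^ (g - j) ≠ 0 :=
  stmt3_general g
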